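/- Let G be a finite simple graph with n vertices and m edges. Then the coefficient of x^{n−4} in the Laplacian matching polynomial LM_G(x) equals E_4 − m·E_2 + E_1·A_2 − A_3 − B + φ_2(G), where E_r is the r-th elementary symmetric polynomial of the degree sequence of G, A_r = Σ_{v∈V(G)} d_G(v)^r, B = Σ_{xy∈E(G)} d_G(x)·d_G(y), and φ_2(G) is the number of 2-matchings of G. -/

import Mathlib

open Polynomial Finset

namespace LMRIV

open scoped Classical

variable {V : Type*}

/-- The degree of a vertex. -/
noncomputable def deg [Fintype V] (G : SimpleGraph V) (v : V) : ℕ :=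
  (univ.filter fun w => G.Adj v w).card

/-- The finset of edges of `G`. -/
noncomputable def edges [Fintype V] (G : SimpleGraph V) : Finset (Sym2 V) :=
  univ.filter fun e => e ∈ G.edgeSet

/-- A matching: a set of pairwise disjoint edges. -/
def IsMatching (G : SimpleGraph V) (M : Finset (Sym2 V)) : Prop :=
  (↑M : Set (Sym2 V)) ⊆ G.edgeSet ∧
    ∀ e ∈ M, ∀ f ∈ M, e ≠ f → ∀ x : V, x ∈ e → x ∉ f

/-- The finset of all matchings of `G` (including the empty matching). -/
noncomputable def matchings [Fintype V] (G : SimpleGraph V) : Finset (Finset (Sym2 V)) :=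
  univ.filter fun M => IsMatching G M

/-- The set of vertices covered by a matching. -/
noncomputable def covered [Fintype V] (M : Finset (Sym2 V)) : Finset V :=
  univ.filter fun x => ∃ e ∈ M, x ∈ e

/-- The Laplacian matching polynomial of `G`, with coefficients in `R`. -/
noncomputable def LM (R : Type*) [CommRing R] [Fintype V] (G : SimpleGraph V) :
    Polynomial R :=
  ∑ M ∈ matchings G, (-1 : Polynomial R) ^ M.card *
    ∏ v ∈ univ \ covered M, (X - C (deg G v : R))

/-- `p_r(G)`: the sum of the `r`-th powers of the complex roots of `LM_G`. -/
noncomputable def psum [Fintype V] (G : SimpleGraph V) (r : ℕ) : ℂ :=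
  (((LM ℂ G).roots).map (· ^ r)).sum

/-- `A_r(G) = Σ_v d_G(v)^r`. -/
noncomputable def A [Fintype V] (G : SimpleGraph V) (r : ℕ) : ℕ :=
  ∑ v : V, (deg G v) ^ r

/-- `B(G) = Σ_{xy ∈ E(G)} d_G(x) d_G(y)`. -/
noncomputable def B [Fintype V] (G : SimpleGraph V) : ℕ :=
  ∑ e ∈ edges G, Sym2.lift ⟨fun x y => deg G x * deg G y, fun x y => mul_comm _ _⟩ e

/-- `C(G) = Σ_{xy ∈ E(G)} (d_G(x)^2 d_G(y) + d_G(x) d_G(y)^2)`. -/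
noncomputable def Csum [Fintype V] (G : SimpleGraph V) : ℕ :=
  ∑ e ∈ edges G,
    Sym2.lift ⟨fun x y => deg G x ^ 2 * deg G y + deg G x * deg G y ^ 2,
      fun x y => by ring⟩ e

/-- The graph obtained from `G` by adding the edge `uv`. -/
def addEdge (G : SimpleGraph V) (u v : V) : SimpleGraph V :=
  G ⊔ SimpleGraph.fromEdgeSet {s(u, v)}

/-- `S_w = Σ_{x ∈ N_G(w)} d_G(x)`. -/
noncomputable def Ssum [Fintype V] (G : SimpleGraph V) (w : V) : ℕ :=
  ∑ x ∈ univ.filter fun x => G.Adj w x, deg G x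

/-- `T_w = Σ_{x ∈ N_G(w)} d_G(x)^2`. -/
noncomputable def Tsum [Fintype V] (G : SimpleGraph V) (w : V) : ℕ :=
  ∑ x ∈ univ.filter fun x => G.Adj w x, (deg G x) ^ 2

/-- The `r`-th elementary symmetric polynomial of the degree sequence of `G`. -/
noncomputable def esymmDeg [Fintype V] (G : SimpleGraph V) (r : ℕ) : ℕ :=
  ∑ s ∈ univ.powersetCard r, ∏ v ∈ s, deg G v

/-- `φ_2(G)`: the number of 2-matchings of `G`. -/
noncomputable def phi2 [Fintype V] (G : SimpleGraph V) : ℕ :=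
  ((matchings G).filter fun M => M.card = 2).card

/-!
Expanding `LM_G` over matchings, a matching with `k` edges contributes `(-1)^k` times the
product of `x - d(v)` over its `n - 2k` uncovered vertices. By Vieta the coefficient of `x^(n-4)`
in that product is the elementary symmetric polynomial `e_(4-2k)` of the uncovered degrees, and it
vanishes for `k ≥ 3`. The empty matching gives `E_4`, each 2-matching gives `1`, and a single
edge `xy` gives `e_2` of the degrees off `{x, y}`, which is
`E_2 - E_1 (d_x + d_y) + d_x² + d_y² + d_x d_y`. Summing over the edges with
`∑_{xy ∈ E} (f x + f y) = ∑_v d(v) f(v)` turns this into `m E_2 - E_1 A_2 + A_3 + B`.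
-/

section Vieta

variable {R ι : Type*} [CommRing R]

theorem _root_.Finset.prod_X_sub_C_coeff (s : Finset ι) (f : ι → R) {k : ℕ} (h : k ≤ #s) :
    (∏ i ∈ s, (X - C (f i))).coeff k =
      (-1) ^ (#s - k) * ∑ t ∈ s.powersetCard (#s - k), ∏ i ∈ t, f i := by
  simp_rw [sub_eq_add_neg, ← map_neg C]
  rw [Finset.prod_X_add_C_coeff s _ h, mul_sum]
  refine sum_congr rfl fun t ht => ?_
  rw [prod_neg, (mem_powersetCard.1 ht).2]

theorem _root_.Finset.sum_powersetCard_succ_insert_prod [DecidableEq ι] {x : ι} {s : Finset ι}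
    (h : x ∉ s) (n : ℕ) (f : ι → R) :
    ∑ t ∈ (insert x s).powersetCard (n + 1), ∏ i ∈ t, f i =
      ∑ t ∈ s.powersetCard (n + 1), ∏ i ∈ t, f i
        + f x * ∑ t ∈ s.powersetCard n, ∏ i ∈ t, f i := by
  have hx : ∀ t ∈ s.powersetCard n, x ∉ t := fun t ht hxt => h ((mem_powersetCard.1 ht).1 hxt)
  rw [powersetCard_succ_insert h, sum_union, sum_image, mul_sum]
  · exact congrArg _ (sum_congr rfl fun t ht => prod_insert (hx t ht))
  · intro a ha b hb hab
    rw [← erase_insert (hx a ha), ← erase_insert (hx b hb), hab]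
  · refine disjoint_left.2 fun t ht hmem => ?_
    obtain ⟨u, -, rfl⟩ := mem_image.1 hmem
    exact h ((mem_powersetCard.1 ht).1 (mem_insert_self x u))

theorem _root_.Finset.sum_powersetCard_two_sdiff_pair [DecidableEq ι] {s : Finset ι} {x y : ι}
    (hx : x ∈ s) (hy : y ∈ s) (hxy : x ≠ y) (f : ι → R) :
    ∑ t ∈ (s \ {x, y}).powersetCard 2, ∏ i ∈ t, f i =
      ∑ t ∈ s.powersetCard 2, ∏ i ∈ t, f i - (∑ i ∈ s, f i) * (f x + f y)
        + f x ^ 2 + f y ^ 2 + f x * f y := by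
  set r := s \ {x, y}
  have hyr : y ∉ r := by simp [r]
  have hxr : x ∉ insert y r := by simp [r, hxy]
  have hs : s = insert x (insert y r) := by
    ext a
    by_cases hax : a = x <;> by_cases hay : a = y <;> simp [r, hax, hay, hx, hy]
  have sum_one : ∑ t ∈ r.powersetCard 1, ∏ i ∈ t, f i = ∑ i ∈ r, f i := by
    simp [powersetCard_one]
  rw [hs, sum_powersetCard_succ_insert_prod hxr, sum_powersetCard_succ_insert_prod hyr,
    sum_powersetCard_succ_insert_prod hyr, sum_one, powersetCard_zero, sum_singleton, prod_empty,
    sum_insert hxr, sum_insert hyr]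
  ring

end Vieta

section Graph

variable {R : Type*} [CommRing R] [Fintype V] (G : SimpleGraph V)

theorem mem_edges {e : Sym2 V} : e ∈ edges G ↔ e ∈ G.edgeSet := by
  simp [edges]

theorem deg_eq_degree (v : V) : deg G v = G.degree v := by
  rw [deg, ← SimpleGraph.card_neighborFinset_eq_degree]
  congr 1
  ext w
  simp

theorem sum_edges_sum_mem (f : V → R) :
    ∑ e ∈ edges G, ∑ v ∈ univ.filter (· ∈ e), f v = ∑ v, (deg G v : R) * f v := by
  simp_rw [sum_filter]
  rw [sum_comm]
  refine sum_congr rfl fun v _ => ?_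
  have incidence : (edges G).filter (v ∈ ·) = G.incidenceFinset v := by
    ext e
    simp [mem_edges, SimpleGraph.mem_incidenceFinset, SimpleGraph.incidenceSet, and_comm]
  rw [← sum_filter, incidence, sum_const, SimpleGraph.card_incidenceFinset_eq_degree,
    deg_eq_degree, nsmul_eq_mul]

theorem cast_esymmDeg (r : ℕ) :
    (esymmDeg G r : R) = ∑ t ∈ univ.powersetCard r, ∏ v ∈ t, (deg G v : R) := by
  simp [esymmDeg]

theorem cast_A (r : ℕ) : (A G r : R) = ∑ v, (deg G v : R) ^ r := by
  simp [A]

theorem cast_B :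
    (B G : R) = ∑ e ∈ edges G,
      Sym2.lift ⟨fun x y => (deg G x : R) * deg G y, fun _ _ => mul_comm _ _⟩ e := by
  rw [B, Nat.cast_sum]
  refine sum_congr rfl fun e _ => ?_
  induction e using Sym2.ind with
  | _ x y => simp

theorem filter_mem_sym2_mk {x y : V} : univ.filter (· ∈ s(x, y)) = ({x, y} : Finset V) := by
  ext
  simp

theorem sum_edges_esymm_two_sdiff :
    ∑ e ∈ edges G,
        ∑ t ∈ (univ \ univ.filter (· ∈ e)).powersetCard 2, ∏ v ∈ t, (deg G v : R) =
      #(edges G) * esymmDeg G 2 - esymmDeg G 1 * A G 2 + A G 3 + B G := by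
  have per_edge : ∀ e ∈ edges G,
      ∑ t ∈ (univ \ univ.filter (· ∈ e)).powersetCard 2, ∏ v ∈ t, (deg G v : R) =
        esymmDeg G 2 - esymmDeg G 1 * ∑ v ∈ univ.filter (· ∈ e), (deg G v : R)
          + ∑ v ∈ univ.filter (· ∈ e), (deg G v : R) ^ 2
          + Sym2.lift ⟨fun x y => (deg G x : R) * deg G y, fun _ _ => mul_comm _ _⟩ e := by
    intro e he
    induction e using Sym2.ind with
    | _ x y =>
      have hxy : x ≠ y := ((mem_edges G).1 he).ne
      rw [filter_mem_sym2_mk, sum_powersetCard_two_sdiff_pair (mem_univ x) (mem_univ y) hxy,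
        sum_pair hxy, sum_pair hxy, Sym2.lift_mk, cast_esymmDeg, cast_esymmDeg, powersetCard_one]
      simp only [sum_map, Function.Embedding.coeFn_mk, prod_singleton]
      ring
  rw [sum_congr rfl per_edge, sum_add_distrib, sum_add_distrib, sum_sub_distrib, sum_const,
    nsmul_eq_mul, ← mul_sum, sum_edges_sum_mem, sum_edges_sum_mem, ← cast_B]
  simp only [cast_A, ← pow_succ']
  ring

end Graph

section Matchings

variable [Fintype V] (G : SimpleGraph V)

theorem mem_matchings {M : Finset (Sym2 V)} : M ∈ matchings G ↔ IsMatching G M := by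
  simp [matchings]

theorem covered_empty : covered (∅ : Finset (Sym2 V)) = ∅ := by
  ext
  simp [covered]

theorem covered_singleton (e : Sym2 V) : covered {e} = univ.filter (· ∈ e) := by
  ext
  simp [covered]

theorem card_covered {M : Finset (Sym2 V)} (hM : M ∈ matchings G) : #(covered M) = 2 * #M := by
  obtain ⟨hE, hdisj⟩ := (mem_matchings G).1 hM
  have covered_eq_biUnion : covered M = M.biUnion fun e => univ.filter (· ∈ e) := by
    ext
    simp [covered]
  have pairwise_disjoint : (M : Set (Sym2 V)).PairwiseDisjoint fun e => univ.filter (· ∈ e) :=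
    fun e he f hf hef => disjoint_left.2 fun x hxe hxf =>
      hdisj e he f hf hef x (mem_filter.1 hxe).2 (mem_filter.1 hxf).2
  have card_edge : ∀ e ∈ M, #(univ.filter (· ∈ e)) = 2 := by
    intro e he
    induction e using Sym2.ind with
    | _ x y => rw [filter_mem_sym2_mk, card_pair (G.mem_edgeSet.1 (hE he)).ne]
  rw [covered_eq_biUnion, card_biUnion pairwise_disjoint, sum_congr rfl card_edge, sum_const,
    smul_eq_mul, mul_comm]

theorem filter_matchings_card_eq_zero :
    (matchings G).filter (#· = 0) = {∅} := by
  ext M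
  simp only [mem_filter, mem_singleton, card_eq_zero, mem_matchings, and_iff_right_iff_imp]
  rintro rfl
  exact ⟨by simp, by simp⟩

theorem filter_matchings_card_eq_one :
    (matchings G).filter (#· = 1) = (edges G).map ⟨singleton, singleton_injective⟩ := by
  ext M
  simp only [mem_filter, card_eq_one, mem_map, mem_matchings, mem_edges,
    Function.Embedding.coeFn_mk]
  constructor
  · rintro ⟨hM, e, rfl⟩
    exact ⟨e, hM.1 (mem_singleton_self e), rfl⟩
  · rintro ⟨e, he, rfl⟩
    refine ⟨⟨by simpa using he, fun f hf g hg hfg => ?_⟩, e, rfl⟩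
    exact absurd ((mem_singleton.1 hf).trans (mem_singleton.1 hg).symm) hfg

end Matchings

section Coefficient

variable {R : Type*} [CommRing R] [Fintype V] (G : SimpleGraph V)

theorem card_uncovered {M : Finset (Sym2 V)} (hM : M ∈ matchings G) :
    #(univ \ covered M) = Fintype.card V - 2 * #M := by
  rw [card_sdiff_of_subset (subset_univ _), card_covered G hM, card_univ]

theorem coeff_prod_uncovered {M : Finset (Sym2 V)} (hM : M ∈ matchings G) (hM2 : #M ≤ 2)
    (hn : 4 ≤ Fintype.card V) :
    (∏ v ∈ univ \ covered M, (X - C (deg G v : R))).coeff (Fintype.card V - 4) =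
      ∑ t ∈ (univ \ covered M).powersetCard (4 - 2 * #M), ∏ v ∈ t, (deg G v : R) := by
  have hcard := card_uncovered G hM
  rw [prod_X_sub_C_coeff _ _ (by omega), hcard,
    show Fintype.card V - 2 * #M - (Fintype.card V - 4) = 4 - 2 * #M by omega,
    Even.neg_one_pow ⟨2 - #M, by omega⟩, one_mul]

theorem coeff_prod_uncovered_eq_zero {M : Finset (Sym2 V)} (hM : M ∈ matchings G)
    (hM3 : 3 ≤ #M) :
    (∏ v ∈ univ \ covered M, (X - C (deg G v : R))).coeff (Fintype.card V - 4) = 0 := by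
  nontriviality R
  have hcov : 2 * #M ≤ Fintype.card V := card_covered G hM ▸ card_le_univ _
  apply coeff_eq_zero_of_natDegree_lt
  rw [natDegree_prod_of_monic _ _ fun v _ => monic_X_sub_C _]
  simp only [natDegree_X_sub_C, sum_const, smul_eq_mul, mul_one, card_uncovered G hM]
  omega

theorem coeff_LM_sub_four (hn : 4 ≤ Fintype.card V) :
    (LM R G).coeff (Fintype.card V - 4) =
      ∑ k ∈ range 3, (-1) ^ k * ∑ M ∈ (matchings G).filter (#· = k),
        ∑ t ∈ (univ \ covered M).powersetCard (4 - 2 * k), ∏ v ∈ t, (deg G v : R) := by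
  have coeff_neg_one_pow_mul :
      ∀ (n k : ℕ) (p : R[X]), ((-1) ^ n * p).coeff k = (-1) ^ n * p.coeff k :=
    fun n k p => by rw [← C_1, ← C_neg, ← C_pow, coeff_C_mul]
  simp_rw [LM, finsetSum_coeff, coeff_neg_one_pow_mul]
  rw [← sum_filter_of_ne (p := (#· < 3)),
    ← sum_fiberwise_of_maps_to (g := card) (t := range 3)]
  · refine sum_congr rfl fun k hk => ?_
    have hk3 : k < 3 := mem_range.1 hk
    rw [filter_filter, mul_sum]
    refine sum_congr (filter_congr fun M _ => and_iff_right_of_imp (· ▸ hk3)) fun M hM => ?_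
    obtain ⟨hMG, rfl⟩ := mem_filter.1 hM
    rw [coeff_prod_uncovered G hMG (by omega) hn]
  · intro M hM
    simpa using (mem_filter.1 hM).2
  · intro M hM hne
    by_contra! h3
    exact hne (by rw [coeff_prod_uncovered_eq_zero G hM h3, mul_zero])

theorem sum_matchings_card_eq_zero :
    ∑ M ∈ (matchings G).filter (#· = 0),
      ∑ t ∈ (univ \ covered M).powersetCard 4, ∏ v ∈ t, (deg G v : R) = esymmDeg G 4 := by
  rw [filter_matchings_card_eq_zero, sum_singleton, covered_empty, sdiff_empty, cast_esymmDeg]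

theorem sum_matchings_card_eq_one :
    ∑ M ∈ (matchings G).filter (#· = 1),
      ∑ t ∈ (univ \ covered M).powersetCard 2, ∏ v ∈ t, (deg G v : R) =
        #(edges G) * esymmDeg G 2 - esymmDeg G 1 * A G 2 + A G 3 + B G := by
  simp only [filter_matchings_card_eq_one, sum_map, Function.Embedding.coeFn_mk, covered_singleton]
  exact sum_edges_esymm_two_sdiff G

theorem sum_matchings_card_eq_two :
    ∑ M ∈ (matchings G).filter (#· = 2),
      ∑ t ∈ (univ \ covered M).powersetCard 0, ∏ v ∈ t, (deg G v : R) = phi2 G := by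
  simp [phi2]

end Coefficient

/-- The coefficient of `x^(n-4)` in `LM_G` equals
`E_4 - m E_2 + E_1 A_2 - A_3 - B + φ_2(G)`. -/
theorem coeff_four [Fintype V] (G : SimpleGraph V) (hn : 4 ≤ Fintype.card V) :
    (LM ℂ G).coeff (Fintype.card V - 4) =
      (esymmDeg G 4 : ℂ) - ((edges G).card : ℂ) * (esymmDeg G 2 : ℂ)
        + (esymmDeg G 1 : ℂ) * (A G 2 : ℂ) - (A G 3 : ℂ) - (B G : ℂ) + (phi2 G : ℂ) := by
  simp only [coeff_LM_sub_four G hn, sum_range_succ, sum_range_zero, Nat.reduceMul, Nat.reduceSub]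
  rw [sum_matchings_card_eq_zero, sum_matchings_card_eq_one, sum_matchings_card_eq_two]
  ring

end LMRIV
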